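/- arXiv:1111.3845 — 2 statements merged into one kernel-verified Lean document; each statement's English description precedes it below -/
import Mathlib

section
/- In the setting of the quiver presentation theorem for Gr(X), the ideal ⟨R'⟩ of kQ' generated by R' = R'_1 ∪ R'_2 ∪ R'_3 does not depend on the choices of lifts aα ∈ kQ^{(j)} of X(ā)(Φ^{(i)}(α)) used in defining R'_3. -/
open CategoryTheory Quiver Finsupp
open scoped Classical

noncomputable section

def pcomp {W : Type} [Quiver.{0} W] {k : Type} [Field k] {x y z : W}
    (f : Quiver.Path x y →₀ k) (g : Quiver.Path y z →₀ k) : Quiver.Path x z →₀ k :=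
  f.sum fun p fp => g.sum fun q gq => Finsupp.single (p.comp q) (gq * fp)

def pathsRel {V : Type} [Quiver.{0} V]
    (R : ∀ ⦃i j : V⦄, Quiver.Path i j → Quiver.Path i j → Prop) : HomRel (Paths V) :=
  fun {_ _} p q => R p q

def PresCat {V : Type} [Quiver.{0} V]
    (R : ∀ ⦃i j : V⦄, Quiver.Path i j → Quiver.Path i j → Prop) : Type :=
  CategoryTheory.Quotient (pathsRel R)

noncomputable instance {V : Type} [Quiver.{0} V]
    (R : ∀ ⦃i j : V⦄, Quiver.Path i j → Quiver.Path i j → Prop) : Category (PresCat R) :=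
  inferInstanceAs (Category (CategoryTheory.Quotient (pathsRel R)))

def presObj {V : Type} [Quiver.{0} V]
    (R : ∀ ⦃i j : V⦄, Quiver.Path i j → Quiver.Path i j → Prop) (i : V) : PresCat R := ⟨i⟩

variable {k : Type} [Field k] {V : Type} [Quiver.{0} V]
variable {W : V → Type} [∀ i, Quiver.{0} (W i)]

def RIdeal (Ri : ∀ (i : V) ⦃x y : W i⦄, (Quiver.Path x y →₀ k) → Prop)
    (i : V) (x y : W i) : Submodule k (Quiver.Path x y →₀ k) :=
  Submodule.span k
    {f | ∃ (x' y' : W i) (α : Quiver.Path x x') (r : Quiver.Path x' y' →₀ k)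
      (β : Quiver.Path y' y),
      Ri i r ∧ f = pcomp (Finsupp.single α 1) (pcomp r (Finsupp.single β 1))}

abbrev XH (Ri : ∀ (i : V) ⦃x y : W i⦄, (Quiver.Path x y →₀ k) → Prop)
    (i : V) (x y : W i) : Type :=
  (Quiver.Path x y →₀ k) ⧸ RIdeal Ri i x y

variable (Ri : ∀ (i : V) ⦃x y : W i⦄, (Quiver.Path x y →₀ k) → Prop)

def qcomp {i : V} {x y z : W i} (f : XH Ri i x y) (g : XH Ri i y z) :
    XH Ri i x z :=
  Submodule.Quotient.mk (pcomp (Quotient.out f) (Quotient.out g))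

variable (fobj : ∀ ⦃i j : V⦄, (i ⟶ j) → W i → W j)

def pobj {i j : V} (p : Quiver.Path i j) (x : W i) : W j :=
  Quiver.Path.rec (motive := fun b _ => W b) x (fun _ e ih => fobj e ih) p

variable (fhomQ : ∀ ⦃i j : V⦄ (a : i ⟶ j) ⦃x y : W i⦄,
  XH Ri i x y →ₗ[k] XH Ri j (fobj a x) (fobj a y))

def phomQ {i j : V} (p : Quiver.Path i j) {x y : W i} :
    XH Ri i x y →ₗ[k] XH Ri j (pobj fobj p x) (pobj fobj p y) :=
  Quiver.Path.rec
    (motive := fun b q =>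
      XH Ri i x y →ₗ[k] XH Ri b (pobj fobj q x) (pobj fobj q y))
    LinearMap.id (fun _ e ih => (fhomQ e).comp ih) p

/-- The new arrows of the quiver `Q'`. -/
inductive QArr : (Σ i : V, W i) → (Σ i : V, W i) → Type where
  | inner : ∀ {i : V} {x y : W i}, (x ⟶ y) → QArr ⟨i, x⟩ ⟨i, y⟩
  | trans : ∀ {i j : V} (a : i ⟶ j) (x : W i), QArr ⟨i, x⟩ ⟨j, fobj a x⟩

/-- Paths of the quiver `Q'`. -/
inductive QPath : (Σ i : V, W i) → (Σ i : V, W i) → Type where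
  | nil : ∀ u, QPath u u
  | cons : ∀ {u v w}, QPath u v → QArr fobj v w → QPath u w

/-- Concatenation of paths of `Q'`. -/
def qpComp {u v w : Σ i : V, W i} (p : QPath fobj u v) (q : QPath fobj v w) :
    QPath fobj u w :=
  QPath.rec (motive := fun w' _ => QPath fobj u w')
    p (fun _ a ih => QPath.cons ih a) q

/-- Convolution composition in `kQ'`. -/
def kpcomp {u v w : Σ i : V, W i}
    (f : QPath fobj u v →₀ k) (g : QPath fobj v w →₀ k) :
    QPath fobj u w →₀ k :=
  f.sum fun p fp => g.sum fun q gq => Finsupp.single (qpComp fobj p q) (gq * fp)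

/-- The embedding of paths of `Q⁽ⁱ⁾` as paths of inner arrows in `Q'`. -/
def innerPath {i : V} {x y : W i} (p : Quiver.Path x y) :
    QPath fobj ⟨i, x⟩ ⟨i, y⟩ :=
  Quiver.Path.rec (motive := fun b _ => QPath fobj ⟨i, x⟩ ⟨i, b⟩)
    (QPath.nil _) (fun _ e ih => QPath.cons ih (QArr.inner e)) p

/-- The embedding `σ⁽ⁱ⁾ : kQ⁽ⁱ⁾ → kQ'`. -/
def sigmaMap {i : V} {x y : W i} (f : Quiver.Path x y →₀ k) :
    QPath fobj ⟨i, x⟩ ⟨i, y⟩ →₀ k :=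
  Finsupp.mapDomain (innerPath fobj) f

/-- The path `π(a, ᵢx)` of transport arrows in `Q'` lifting a path `a` of `Q`. -/
def piPath {i j : V} (p : Quiver.Path i j) (x : W i) :
    QPath fobj ⟨i, x⟩ ⟨j, pobj fobj p x⟩ :=
  Quiver.Path.rec (motive := fun b q => QPath fobj ⟨i, x⟩ ⟨b, pobj fobj q x⟩)
    (QPath.nil _) (fun q e ih => QPath.cons ih (QArr.trans e (pobj fobj q x))) p

/-- Transport of a path of `Q'` along an equality of its target vertex. -/
def castQP {u : Σ i : V, W i} {j : V} {y y' : W j} (e : y = y')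
    (p : QPath fobj u ⟨j, y⟩) : QPath fobj u ⟨j, y'⟩ := by
  cases e; exact p

/-- Transport of a hom-class along equalities of objects. -/
def castXH {j : V} {u u' y y' : W j} (e : u = u') (e' : y = y')
    (f : XH Ri j u y) : XH Ri j u' y' := by
  cases e; cases e'; exact f

variable (R : ∀ ⦃i j : V⦄, Quiver.Path i j → Quiver.Path i j → Prop)
variable (lift : ∀ ⦃i j : V⦄ (a : i ⟶ j) ⦃x y : W i⦄ (α : x ⟶ y),
  Quiver.Path (fobj a x) (fobj a y) →₀ k)

/-- The relations `R' = R'₁ ∪ R'₂ ∪ R'₃` on `kQ'`. -/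
inductive RelR' : ∀ ⦃u v : Σ i : V, W i⦄, (QPath fobj u v →₀ k) → Prop where
  | r1 : ∀ {i : V} {x y : W i} (r : Quiver.Path x y →₀ k), Ri i r →
      RelR' (sigmaMap fobj r)
  | r2 : ∀ {i j : V} (g h : Quiver.Path i j), R g h → ∀ (x : W i)
      (e : pobj fobj h x = pobj fobj g x),
      RelR' (Finsupp.single (piPath fobj g x) 1
        - Finsupp.single (castQP fobj e (piPath fobj h x)) 1)
  | r3 : ∀ {i j : V} (a : i ⟶ j) {x y : W i} (α : x ⟶ y),
      RelR' (Finsupp.single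
          (QPath.cons (QPath.cons (QPath.nil ⟨i, x⟩) (QArr.inner α)) (QArr.trans a y)) 1
        - kpcomp fobj (Finsupp.single (QPath.cons (QPath.nil ⟨i, x⟩) (QArr.trans a x)) 1)
            (sigmaMap fobj (lift a α)))

/-- The ideal `⟨R'⟩` of `kQ'`. -/
def IdR' (u v : Σ i : V, W i) : Submodule k (QPath fobj u v →₀ k) :=
  Submodule.span k
    {f | ∃ (u' v' : Σ i : V, W i) (α : QPath fobj u u')
      (g : QPath fobj u' v' →₀ k) (β : QPath fobj v' v),
      RelR' Ri fobj R lift g ∧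
        f = kpcomp fobj (Finsupp.single α 1) (kpcomp fobj g (Finsupp.single β 1))}

end

noncomputable section
variable {k : Type} [Field k] {V : Type} [Quiver.{0} V]
variable {W : V → Type} [∀ i, Quiver.{0} (W i)]
variable (Ri : ∀ (i : V) ⦃x y : W i⦄, (Quiver.Path x y →₀ k) → Prop)
variable (R : ∀ ⦃i j : V⦄, Quiver.Path i j → Quiver.Path i j → Prop)
variable (fobj : ∀ ⦃i j : V⦄, (i ⟶ j) → W i → W j)
variable (fhomQ : ∀ ⦃i j : V⦄ (a : i ⟶ j) ⦃x y : W i⦄,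
  XH Ri i x y →ₗ[k] XH Ri j (fobj a x) (fobj a y))

/-- The hom-sets `I(i,j)` of the presented category `I = ⟨Q ∣ R⟩`. -/
abbrev IHom (i j : V) : Type := presObj R i ⟶ presObj R j

/-- Action of a morphism of `I` on objects (via a representative path). -/
def XobjI {i j : V} (a : IHom R i j) (x : W i) : W j := pobj fobj (Quot.out a) x

/-- Hom-modules of the Grothendieck construction:
`Gr(X)((i,x),(j,y)) = ⨁_{a ∈ I(i,j)} X(j)(X(a)x, y)`. -/
abbrev GrH (i : V) (x : W i) (j : V) (y : W j) : Type :=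
  DirectSum (IHom R i j) (fun a => XH Ri j (XobjI R fobj a x) y)

/-- The identity of `Gr(X)` at `(i,x)`. -/
def grId (i : V) (x : W i)
    (hid : XobjI R fobj (𝟙 (presObj R i)) x = x) : GrH Ri R fobj i x i x :=
  DirectSum.of (fun a => XH Ri i (XobjI R fobj a x) x) (𝟙 (presObj R i))
    (castXH Ri hid.symm rfl
      (Submodule.Quotient.mk (Finsupp.single Quiver.Path.nil 1)))

/-- Composition in `Gr(X)`: `(g ∘ f)_c = ∑_{c = b∘a} g_b · X(b)(f_a)`. -/
def grcomp
    (hX : ∀ (i j l : V) (a : IHom R i j) (b : IHom R j l) (x : W i),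
      XobjI R fobj (a ≫ b) x = XobjI R fobj b (XobjI R fobj a x))
    {i : V} {x : W i} {j : V} {y : W j} {l : V} {z : W l}
    (f : GrH Ri R fobj i x j y) (g : GrH Ri R fobj j y l z) :
    GrH Ri R fobj i x l z :=
  DFinsupp.sum f fun a fa => DFinsupp.sum g fun b gb =>
    DirectSum.of (fun c => XH Ri l (XobjI R fobj c x) z) (a ≫ b)
      (castXH Ri (hX i j l a b x).symm rfl
        (qcomp Ri (phomQ Ri fobj fhomQ (Quot.out b) fa) gb))

end


/-!
Two admissible lifts of `X(ā)(Φ⁽ⁱ⁾(α))` differ by an element `d` of `⟨R⁽ʲ⁾⟩`, so the two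
versions of an `R'₃`-relation differ by `(a, ᵢx) · σ⁽ʲ⁾(d)`. Since `σ⁽ʲ⁾` carries the
generators of `⟨R⁽ʲ⁾⟩` to two-sided multiples of `R'₁`-relations, that difference lies in
either ideal, and each ideal contains the other's generators.
-/

noncomputable section
variable {k : Type} [Field k] {Q : Type} [Quiver.{0} Q]

theorem pcomp_single_one_left {x y z : Q} (α : Quiver.Path x y)
    (g : Quiver.Path y z →₀ k) :
    pcomp (Finsupp.single α 1) g = Finsupp.mapDomain α.comp g := by
  rw [pcomp, Finsupp.sum_single_index (by simp)]
  simp only [mul_one, Finsupp.mapDomain]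

theorem pcomp_single_one_right {x y z : Q} (f : Quiver.Path x y →₀ k)
    (β : Quiver.Path y z) :
    pcomp f (Finsupp.single β 1) = Finsupp.mapDomain (·.comp β) f := by
  refine Finsupp.sum_congr fun p _ => ?_
  rw [Finsupp.sum_single_index (by simp), one_mul]

end

noncomputable section
variable {k : Type} [Field k] {V : Type} [Quiver.{0} V]
variable {W : V → Type} [∀ i, Quiver.{0} (W i)]
variable (fobj : ∀ ⦃i j : V⦄, (i ⟶ j) → W i → W j)

theorem qpComp_assoc {u v w z : Σ i : V, W i} (p : QPath fobj u v)
    (q : QPath fobj v w) (r : QPath fobj w z) :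
    qpComp fobj (qpComp fobj p q) r = qpComp fobj p (qpComp fobj q r) := by
  induction r with
  | nil => rfl
  | cons r a ih => exact congrArg (QPath.cons · a) ih

theorem nil_qpComp {u v : Σ i : V, W i} (p : QPath fobj u v) :
    qpComp fobj (QPath.nil u) p = p := by
  induction p with
  | nil => rfl
  | cons p a ih => exact congrArg (QPath.cons · a) ih

theorem innerPath_comp {i : V} {x y z : W i} (p : Quiver.Path x y)
    (q : Quiver.Path y z) :
    innerPath fobj (p.comp q) = qpComp fobj (innerPath fobj p) (innerPath fobj q) := by
  induction q with
  | nil => rfl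
  | cons q e ih => exact congrArg (QPath.cons · (QArr.inner e)) ih

def sandwich {u u' v' v : Σ i : V, W i} (α : QPath fobj u u') (β : QPath fobj v' v) :
    (QPath fobj u' v' →₀ k) →ₗ[k] (QPath fobj u v →₀ k) :=
  Finsupp.lmapDomain k k fun p => qpComp fobj α (qpComp fobj p β)

theorem kpcomp_single_one_left {u v w : Σ i : V, W i} (α : QPath fobj u v)
    (g : QPath fobj v w →₀ k) :
    kpcomp fobj (Finsupp.single α 1) g = Finsupp.mapDomain (qpComp fobj α) g := by
  rw [kpcomp, Finsupp.sum_single_index (by simp)]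
  simp only [mul_one, Finsupp.mapDomain]

theorem kpcomp_single_one_right {u v w : Σ i : V, W i} (f : QPath fobj u v →₀ k)
    (β : QPath fobj v w) :
    kpcomp fobj f (Finsupp.single β 1) = Finsupp.mapDomain (qpComp fobj · β) f := by
  refine Finsupp.sum_congr fun p _ => ?_
  rw [Finsupp.sum_single_index (by simp), one_mul]

theorem kpcomp_single_kpcomp_single {u u' v' v : Σ i : V, W i} (α : QPath fobj u u')
    (g : QPath fobj u' v' →₀ k) (β : QPath fobj v' v) :
    kpcomp fobj (Finsupp.single α 1) (kpcomp fobj g (Finsupp.single β 1))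
      = sandwich fobj α β g := by
  rw [kpcomp_single_one_right, kpcomp_single_one_left, ← Finsupp.mapDomain_comp]
  rfl

theorem kpcomp_single_eq_sandwich_nil {u v w : Σ i : V, W i} (α : QPath fobj u v)
    (g : QPath fobj v w →₀ k) :
    kpcomp fobj (Finsupp.single α 1) g = sandwich fobj α (QPath.nil w) g :=
  kpcomp_single_one_left fobj α g

theorem sandwich_sandwich {u u' u'' v'' v' v : Σ i : V, W i} (α : QPath fobj u u')
    (α' : QPath fobj u' u'') (β' : QPath fobj v'' v') (β : QPath fobj v' v)
    (g : QPath fobj u'' v'' →₀ k) :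
    sandwich fobj α β (sandwich fobj α' β' g)
      = sandwich fobj (qpComp fobj α α') (qpComp fobj β' β) g := by
  simp only [sandwich, Finsupp.lmapDomain_apply, ← Finsupp.mapDomain_comp]
  congr 1
  funext p
  simp only [Function.comp, qpComp_assoc]

theorem sigmaMap_pcomp_single_pcomp_single {i : V} {x x' y' y : W i}
    (α : Quiver.Path x x') (r : Quiver.Path x' y' →₀ k) (β : Quiver.Path y' y) :
    sigmaMap fobj (pcomp (Finsupp.single α 1) (pcomp r (Finsupp.single β 1)))
      = sandwich fobj (innerPath fobj α) (innerPath fobj β) (sigmaMap fobj r) := by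
  simp only [sigmaMap, sandwich, pcomp_single_one_right, pcomp_single_one_left,
    Finsupp.lmapDomain_apply, ← Finsupp.mapDomain_comp]
  congr 1
  funext p
  simp only [Function.comp, innerPath_comp]

theorem sigmaMap_sub {i : V} {x y : W i} (f g : Quiver.Path x y →₀ k) :
    sigmaMap fobj (f - g) = sigmaMap fobj f - sigmaMap fobj g :=
  map_sub (Finsupp.lmapDomain k k (innerPath fobj)) f g

variable (Ri : ∀ (i : V) ⦃x y : W i⦄, (Quiver.Path x y →₀ k) → Prop)
variable (R : ∀ ⦃i j : V⦄, Quiver.Path i j → Quiver.Path i j → Prop)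
variable (lift : ∀ ⦃i j : V⦄ (a : i ⟶ j) ⦃x y : W i⦄ (α : x ⟶ y),
  Quiver.Path (fobj a x) (fobj a y) →₀ k)

theorem sandwich_mem_IdR' {u u' v' v : Σ i : V, W i} (α : QPath fobj u u')
    (β : QPath fobj v' v) {g : QPath fobj u' v' →₀ k} (hg : g ∈ IdR' Ri fobj R lift u' v') :
    sandwich fobj α β g ∈ IdR' Ri fobj R lift u v := by
  suffices IdR' Ri fobj R lift u' v' ≤ (IdR' Ri fobj R lift u v).comap (sandwich fobj α β) from
    this hg
  rw [IdR', Submodule.span_le]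
  rintro _ ⟨_, _, α', g', β', hg', rfl⟩
  rw [SetLike.mem_coe, Submodule.mem_comap, kpcomp_single_kpcomp_single, sandwich_sandwich,
    ← kpcomp_single_kpcomp_single]
  exact Submodule.subset_span ⟨_, _, _, g', _, hg', rfl⟩

theorem mem_IdR'_of_relR' {u v : Σ i : V, W i} {g : QPath fobj u v →₀ k}
    (hg : RelR' Ri fobj R lift g) : g ∈ IdR' Ri fobj R lift u v := by
  have hg_eq : g = kpcomp fobj (Finsupp.single (QPath.nil u) 1)
      (kpcomp fobj g (Finsupp.single (QPath.nil v) 1)) := by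
    rw [kpcomp_single_kpcomp_single, sandwich, Finsupp.lmapDomain_apply]
    simp only [nil_qpComp]
    exact Finsupp.mapDomain_id.symm
  exact Submodule.subset_span ⟨u, v, _, g, _, hg, hg_eq⟩

theorem sigmaMap_mem_IdR' {j : V} {x y : W j} {d : Quiver.Path x y →₀ k}
    (hd : d ∈ RIdeal Ri j x y) : sigmaMap fobj d ∈ IdR' Ri fobj R lift ⟨j, x⟩ ⟨j, y⟩ := by
  suffices RIdeal Ri j x y ≤ (IdR' Ri fobj R lift ⟨j, x⟩ ⟨j, y⟩).comap
      (Finsupp.lmapDomain k k (innerPath fobj)) from this hd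
  rw [RIdeal, Submodule.span_le]
  rintro _ ⟨_, _, α, r, β, hr, rfl⟩
  rw [SetLike.mem_coe, Submodule.mem_comap, Finsupp.lmapDomain_apply, ← sigmaMap,
    sigmaMap_pcomp_single_pcomp_single]
  exact sandwich_mem_IdR' fobj Ri R lift _ _ (mem_IdR'_of_relR' fobj Ri R lift (.r1 r hr))

theorem IdR'_le_of_sub_mem_RIdeal
    (lift₁ lift₂ : ∀ ⦃i j : V⦄ (a : i ⟶ j) ⦃x y : W i⦄ (α : x ⟶ y),
      Quiver.Path (fobj a x) (fobj a y) →₀ k)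
    (hd : ∀ ⦃i j : V⦄ (a : i ⟶ j) ⦃x y : W i⦄ (α : x ⟶ y),
      lift₂ a α - lift₁ a α ∈ RIdeal Ri j (fobj a x) (fobj a y))
    (u v : Σ i : V, W i) :
    IdR' Ri fobj R lift₁ u v ≤ IdR' Ri fobj R lift₂ u v := by
  rw [IdR', Submodule.span_le]
  rintro _ ⟨_, _, α, g, β, hg, rfl⟩
  rw [SetLike.mem_coe, kpcomp_single_kpcomp_single]
  refine sandwich_mem_IdR' fobj Ri R lift₂ α β ?_
  cases hg with
  | r1 r hr => exact mem_IdR'_of_relR' fobj Ri R lift₂ (.r1 r hr)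
  | r2 g h hgh x e => exact mem_IdR'_of_relR' fobj Ri R lift₂ (.r2 g h hgh x e)
  | @r3 i _ a x _ α' =>
    have hmem := add_mem (mem_IdR'_of_relR' fobj Ri R lift₂ (.r3 a α'))
      (sandwich_mem_IdR' fobj Ri R lift₂
        (QPath.cons (QPath.nil ⟨i, x⟩) (QArr.trans a x)) (QPath.nil _)
        (sigmaMap_mem_IdR' fobj Ri R lift₂ (hd a α')))
    simp only [kpcomp_single_eq_sandwich_nil, sigmaMap_sub, map_sub] at hmem ⊢
    rwa [sub_add_sub_cancel] at hmem

end

/-- The ideal `⟨R'⟩` of `kQ'` does not depend on the choice of the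
lifts `aα` of `X(ā)(Φ⁽ⁱ⁾(α))` used in defining `R'₃`. -/
theorem stmt16 {k : Type} [Field k] {V : Type} [Quiver.{0} V]
    {W : V → Type} [∀ i, Quiver.{0} (W i)]
    (Ri : ∀ (i : V) ⦃x y : W i⦄, (Quiver.Path x y →₀ k) → Prop)
    (R : ∀ ⦃i j : V⦄, Quiver.Path i j → Quiver.Path i j → Prop)
    (fobj : ∀ ⦃i j : V⦄, (i ⟶ j) → W i → W j)
    (fhomQ : ∀ ⦃i j : V⦄ (a : i ⟶ j) ⦃x y : W i⦄,
      XH Ri i x y →ₗ[k] XH Ri j (fobj a x) (fobj a y))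
    (lift₁ lift₂ : ∀ ⦃i j : V⦄ (a : i ⟶ j) ⦃x y : W i⦄ (α : x ⟶ y),
      Quiver.Path (fobj a x) (fobj a y) →₀ k)
    (hlift₁ : ∀ (i j : V) (a : i ⟶ j) (x y : W i) (α : x ⟶ y),
      (Submodule.Quotient.mk (lift₁ a α) : XH Ri j (fobj a x) (fobj a y))
        = fhomQ a (Submodule.Quotient.mk
            (Finsupp.single (Quiver.Path.nil.cons α) 1)))
    (hlift₂ : ∀ (i j : V) (a : i ⟶ j) (x y : W i) (α : x ⟶ y),
      (Submodule.Quotient.mk (lift₂ a α) : XH Ri j (fobj a x) (fobj a y))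
        = fhomQ a (Submodule.Quotient.mk
            (Finsupp.single (Quiver.Path.nil.cons α) 1))) :
    ∀ u v : Σ i : V, W i,
      IdR' Ri fobj R lift₁ u v = IdR' Ri fobj R lift₂ u v := by
  intro u v
  have hdiff : ∀ ⦃i j : V⦄ (a : i ⟶ j) ⦃x y : W i⦄ (α : x ⟶ y),
      lift₂ a α - lift₁ a α ∈ RIdeal Ri j (fobj a x) (fobj a y) := fun i j a x y α =>
    (Submodule.Quotient.eq _).mp ((hlift₂ i j a x y α).trans (hlift₁ i j a x y α).symm)
  refine le_antisymm (IdR'_le_of_sub_mem_RIdeal fobj Ri R lift₁ lift₂ hdiff u v)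
    (IdR'_le_of_sub_mem_RIdeal fobj Ri R lift₂ lift₁ (fun i j a x y α => ?_) u v)
  simpa only [neg_sub] using neg_mem (hdiff a α)
end

section
/- In the setting of the quiver presentation theorem for Gr(X), for every pair (g,h) in the congruence R^# generated by R on ℙQ, and every vertex x of Q^{(i)} (where g,h : i → j), the classes of the lifted paths π(g, ᵢx) and π(h, ᵢx) in kQ'/⟨R'⟩ are equal. -/
open CategoryTheory Quiver Finsupp
open scoped Classical

/-- The closure `R^c` of `R` under pre- and post-composition with paths. -/
def PRc {V : Type} [Quiver.{0} V]
    (R : ∀ ⦃i j : V⦄, Quiver.Path i j → Quiver.Path i j → Prop) :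
    ∀ ⦃i j : V⦄, Quiver.Path i j → Quiver.Path i j → Prop :=
  fun {i j} p q =>
    ∃ (i' j' : V) (α : Quiver.Path i i') (a b : Quiver.Path i' j')
      (β : Quiver.Path j' j),
      R a b ∧ p = (α.comp a).comp β ∧ q = (α.comp b).comp β

/-- The congruence `R^#` on `ℙQ` generated by `R`. -/
def PRsharp {V : Type} [Quiver.{0} V]
    (R : ∀ ⦃i j : V⦄, Quiver.Path i j → Quiver.Path i j → Prop) :
    ∀ ⦃i j : V⦄, Quiver.Path i j → Quiver.Path i j → Prop :=
  fun {i j} p q => Relation.EqvGen (fun p' q' : Quiver.Path i j => PRc R p' q') p q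

/-!
A path `g` of `Q` acts on the vertices of `Q⁽ⁱ⁾` (`pobj`) and lifts to the transport
path `π(g, ᵢx)`; both constructions turn concatenation into concatenation. Hence a
generator `(α a β, α b β)` of `R^#` lifts to `π(α)·(π(a) − π(b))·π(β)`, a two-sided
multiple of the relation `π(a) − π(b) ∈ R'₂`, so it lies in `⟨R'⟩`; the
equivalence-relation rules do the rest. Since `π(g, ᵢx)` and `π(h, ᵢx)` end at
`pobj g x` and `pobj h x`, which are only propositionally equal, the lifted paths are
compared after transport to a common endpoint `y`.
-/

section Lifting

variable {k : Type} [Field k] {V : Type} [Quiver.{0} V]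
variable {W : V → Type} [∀ i, Quiver.{0} (W i)]
variable (fobj : ∀ ⦃i j : V⦄, (i ⟶ j) → W i → W j)

omit [∀ i, Quiver.{0} (W i)] in
lemma pobj_comp {i j l : V} (p : Quiver.Path i j) (q : Quiver.Path j l) (x : W i) :
    pobj fobj (p.comp q) x = pobj fobj q (pobj fobj p x) := by
  induction q with
  | nil => rfl
  | cons q e ih => exact congrArg (fobj e) ih

lemma castQP_heq {u : Σ i : V, W i} {j : V} {y y' : W j} (e : y = y')
    (p : QPath fobj u ⟨j, y⟩) : HEq (castQP fobj e p) p := by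
  cases e; rfl

lemma piPath_heq_of_eq {i j : V} (p : Quiver.Path i j) {x x' : W i} (e : x = x') :
    HEq (piPath fobj p x) (piPath fobj p x') := by
  cases e; rfl

lemma cons_trans_heq {i j : V} (a : i ⟶ j) {y y' : W i} (e : y = y')
    {u : Σ i : V, W i} {p : QPath fobj u ⟨i, y⟩} {p' : QPath fobj u ⟨i, y'⟩}
    (hp : HEq p p') :
    HEq (QPath.cons p (QArr.trans a y)) (QPath.cons p' (QArr.trans a y')) := by
  cases e; cases hp; rfl

lemma qpComp_heq {u v v' w w' : Σ i : V, W i} (ev : v = v') (ew : w = w')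
    {p : QPath fobj u v} {p' : QPath fobj u v'} {q : QPath fobj v w} {q' : QPath fobj v' w'}
    (hp : HEq p p') (hq : HEq q q') :
    HEq (qpComp fobj p q) (qpComp fobj p' q') := by
  subst ev ew; cases hp; cases hq; rfl

lemma piPath_comp_heq {i j l : V} (p : Quiver.Path i j) (q : Quiver.Path j l) (x : W i) :
    HEq (piPath fobj (p.comp q) x)
      (qpComp fobj (piPath fobj p x) (piPath fobj q (pobj fobj p x))) := by
  induction q with
  | nil => rfl
  | cons q e ih => exact cons_trans_heq fobj e (pobj_comp fobj p q x) ih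

lemma piPath_comp_comp_heq {i i' j' j : V} (α : Quiver.Path i i') (a : Quiver.Path i' j')
    (β : Quiver.Path j' j) (x : W i) :
    HEq (piPath fobj ((α.comp a).comp β) x)
      (qpComp fobj (piPath fobj α x)
        (qpComp fobj (piPath fobj a (pobj fobj α x))
          (piPath fobj β (pobj fobj a (pobj fobj α x))))) := by
  rw [Quiver.Path.comp_assoc]
  refine (piPath_comp_heq fobj α (a.comp β) x).trans ?_
  exact qpComp_heq fobj rfl (by rw [pobj_comp]) HEq.rfl (piPath_comp_heq fobj a β _)

lemma kpcomp_single_left {u v w : Σ i : V, W i} (p : QPath fobj u v)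
    (g : QPath fobj v w →₀ k) :
    kpcomp fobj (Finsupp.single p (1 : k)) g = Finsupp.mapDomain (qpComp fobj p) g := by
  unfold kpcomp
  rw [Finsupp.sum_single_index (by simp)]
  simp [Finsupp.mapDomain]

lemma kpcomp_single_right {u v w : Σ i : V, W i} (f : QPath fobj u v →₀ k)
    (β : QPath fobj v w) :
    kpcomp fobj f (Finsupp.single β (1 : k)) =
      Finsupp.mapDomain (fun p => qpComp fobj p β) f := by
  unfold kpcomp Finsupp.mapDomain
  congr 1
  funext p fp
  rw [Finsupp.sum_single_index] <;> simp

variable (Ri : ∀ (i : V) ⦃x y : W i⦄, (Quiver.Path x y →₀ k) → Prop)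
variable (R : ∀ ⦃i j : V⦄, Quiver.Path i j → Quiver.Path i j → Prop)
variable (lift : ∀ ⦃i j : V⦄ (a : i ⟶ j) ⦃x y : W i⦄, (x ⟶ y) →
  Quiver.Path (fobj a x) (fobj a y) →₀ k)

lemma single_sub_single_mem_IdR' {u u' v' v : Σ i : V, W i} {p q : QPath fobj u' v'}
    (hpq : RelR' Ri fobj R lift (Finsupp.single p (1 : k) - Finsupp.single q 1))
    (α : QPath fobj u u') (β : QPath fobj v' v) :
    Finsupp.single (qpComp fobj α (qpComp fobj p β)) (1 : k)
        - Finsupp.single (qpComp fobj α (qpComp fobj q β)) 1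
      ∈ IdR' Ri fobj R lift u v := by
  refine Submodule.subset_span ⟨u', v', α, _, β, hpq, ?_⟩
  simp only [kpcomp_single_right, kpcomp_single_left, Finsupp.mapDomain_sub,
    Finsupp.mapDomain_single]

noncomputable def liftClass {i j : V} (g : Quiver.Path i j) (x : W i) {y : W j}
    (e : pobj fobj g x = y) :
    (QPath fobj ⟨i, x⟩ ⟨j, y⟩ →₀ k) ⧸ IdR' Ri fobj R lift ⟨i, x⟩ ⟨j, y⟩ :=
  Submodule.Quotient.mk (Finsupp.single (castQP fobj e (piPath fobj g x)) 1)

lemma liftClass_comp_comp_eq {i i' j' j : V} {a b : Quiver.Path i' j'} (hab : R a b)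
    (hobj : pobj fobj b = pobj fobj a) (α : Quiver.Path i i') (β : Quiver.Path j' j) (x : W i)
    {y : W j} (eg : pobj fobj ((α.comp a).comp β) x = y)
    (eh : pobj fobj ((α.comp b).comp β) x = y) :
    liftClass fobj Ri R lift ((α.comp a).comp β) x eg =
      liftClass fobj Ri R lift ((α.comp b).comp β) x eh := by
  set z := pobj fobj α x
  have e0 : pobj fobj b z = pobj fobj a z := congrFun hobj z
  have eβ : pobj fobj β (pobj fobj a z) = y := by simpa only [pobj_comp] using eg
  have hmem := single_sub_single_mem_IdR' fobj Ri R lift (RelR'.r2 a b hab z e0)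
    (piPath fobj α x) (castQP fobj eβ (piPath fobj β (pobj fobj a z)))
  refine (Submodule.Quotient.eq _).2 ?_
  convert hmem using 3 <;> apply eq_of_heq
  · have ew : (⟨j, pobj fobj β (pobj fobj a z)⟩ : Σ i : V, W i) = ⟨j, y⟩ := by rw [eβ]
    refine (castQP_heq fobj eg _).trans ((piPath_comp_comp_heq fobj α a β x).trans ?_)
    exact qpComp_heq fobj rfl ew HEq.rfl
      (qpComp_heq fobj rfl ew HEq.rfl (castQP_heq fobj eβ _).symm)
  · have ev : (⟨j', pobj fobj b z⟩ : Σ i : V, W i) = ⟨j', pobj fobj a z⟩ := by rw [e0]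
    have ew : (⟨j, pobj fobj β (pobj fobj b z)⟩ : Σ i : V, W i) = ⟨j, y⟩ := by
      rw [e0, eβ]
    refine (castQP_heq fobj eh _).trans ((piPath_comp_comp_heq fobj α b β x).trans ?_)
    refine qpComp_heq fobj rfl ew HEq.rfl
      (qpComp_heq fobj ev ew (castQP_heq fobj e0 _).symm ?_)
    exact (piPath_heq_of_eq fobj β e0).trans (castQP_heq fobj eβ _).symm

variable {R}

omit [∀ i, Quiver.{0} (W i)] in
lemma pobj_eq_of_PRsharp
    (hRobj : ∀ (i j : V) (g h : Quiver.Path i j), R g h → ∀ x : W i,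
      pobj fobj g x = pobj fobj h x)
    {i j : V} {g h : Quiver.Path i j} (hs : PRsharp R g h) :
    pobj fobj g = pobj fobj h := by
  induction hs with
  | rel p q hpq =>
      obtain ⟨i', j', α, a, b, β, hab, rfl, rfl⟩ := hpq
      funext x
      simp only [pobj_comp, hRobj _ _ a b hab]
  | refl p => rfl
  | symm p q _ ih => exact ih.symm
  | trans p q r _ _ ih₁ ih₂ => exact ih₁.trans ih₂

lemma liftClass_eq_of_PRsharp
    (hRobj : ∀ (i j : V) (g h : Quiver.Path i j), R g h → ∀ x : W i,
      pobj fobj g x = pobj fobj h x)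
    {i j : V} {g h : Quiver.Path i j} (hs : PRsharp R g h) (x : W i) {y : W j}
    (eg : pobj fobj g x = y) (eh : pobj fobj h x = y) :
    liftClass fobj Ri R lift g x eg = liftClass fobj Ri R lift h x eh := by
  induction hs generalizing y with
  | rel p q hpq =>
      obtain ⟨i', j', α, a, b, β, hab, rfl, rfl⟩ := hpq
      exact liftClass_comp_comp_eq fobj Ri R lift hab
        (funext fun z => (hRobj _ _ a b hab z).symm) α β x eg eh
  | refl p => rfl
  | symm p q _ ih => exact (ih eh eg).symm
  | trans p q r hpq _ ih₁ ih₂ =>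
      have hq : pobj fobj q x = y :=
        (congrFun (pobj_eq_of_PRsharp fobj hRobj hpq) x).symm.trans eg
      exact (ih₁ eg hq).trans (ih₂ hq eh)

end Lifting

/-- For every pair `(g,h)` in the congruence `R^#` generated by `R`
and every vertex `x` of `Q⁽ⁱ⁾`, the classes of the lifted paths `π(g, ᵢx)` and
`π(h, ᵢx)` in `kQ'/⟨R'⟩` coincide. -/
theorem stmt17 {k : Type} [Field k] {V : Type} [Quiver.{0} V]
    {W : V → Type} [∀ i, Quiver.{0} (W i)]
    (Ri : ∀ (i : V) ⦃x y : W i⦄, (Quiver.Path x y →₀ k) → Prop)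
    (R : ∀ ⦃i j : V⦄, Quiver.Path i j → Quiver.Path i j → Prop)
    (fobj : ∀ ⦃i j : V⦄, (i ⟶ j) → W i → W j)
    (lift : ∀ ⦃i j : V⦄ (a : i ⟶ j) ⦃x y : W i⦄ (α : x ⟶ y),
      Quiver.Path (fobj a x) (fobj a y) →₀ k)
    (hRobj : ∀ (i j : V) (g h : Quiver.Path i j), R g h → ∀ x : W i,
      pobj fobj g x = pobj fobj h x) :
    ∀ (i j : V) (g h : Quiver.Path i j), PRsharp R g h → ∀ x : W i,
      ∃ e : pobj fobj h x = pobj fobj g x,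
        (Submodule.Quotient.mk (Finsupp.single (piPath fobj g x) 1)
            : (QPath fobj ⟨i, x⟩ ⟨j, pobj fobj g x⟩ →₀ k)
                ⧸ IdR' Ri fobj R lift ⟨i, x⟩ ⟨j, pobj fobj g x⟩)
          = Submodule.Quotient.mk
              (Finsupp.single (castQP fobj e (piPath fobj h x)) 1) := by
  intro i j g h hs x
  have e := congrFun (pobj_eq_of_PRsharp fobj hRobj hs) x
  exact ⟨e.symm, liftClass_eq_of_PRsharp fobj Ri lift hRobj hs x rfl e.symm⟩
end
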